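/- arXiv:1707.00337 — 7 statements merged into one kernel-verified Lean document; each statement's English description precedes it below -/
import Mathlib

section
/- Let H be a symmetric N×N real matrix, λ ≥ 0 a real, J an M×N real matrix, and c ∈ ℝ^M such that g := J^T c ≠ 0. Suppose H + λI is positive semidefinite and n ∈ ℝ^N satisfies (H + λI) n = −g. Then n ≠ 0, and moreover n + t ≠ 0 for every t ∈ ℝ^N with J t = 0. -/
open Matrix

/-!
If `n + t = 0` with `J t = 0`, then `J n = 0`, so `n` is orthogonal to `g = Jᵀ c` and
`nᵀ (H + λI) n = -nᵀ g = 0`. For a positive semidefinite matrix a vanishing quadratic form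
forces `(H + λI) n = 0`, i.e. `g = 0`. The case `n = 0` is `t = 0`.
-/

namespace Matrix

theorem dotProduct_transpose_mulVec_eq_zero_of_mulVec_eq_zero {m n R : Type*} [Fintype m]
    [Fintype n] [CommSemiring R] {J : Matrix m n R} {x : n → R} (hx : J *ᵥ x = 0)
    (c : m → R) : x ⬝ᵥ Jᵀ *ᵥ c = 0 := by
  rw [dotProduct_mulVec, vecMul_transpose, hx, zero_dotProduct]

open scoped ComplexOrder in
theorem PosSemidef.eq_zero_of_mulVec_eq_of_dotProduct_eq_zero {n 𝕜 : Type*} [Fintype n]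
    [RCLike 𝕜] {A : Matrix n n 𝕜} (hA : A.PosSemidef) {x b : n → 𝕜} (hx : A *ᵥ x = b)
    (hxb : star x ⬝ᵥ b = 0) : b = 0 :=
  hx ▸ (hA.dotProduct_mulVec_zero_iff x).mp (hx ▸ hxb)

theorem PosSemidef.transpose_mulVec_eq_zero_of_mulVec_eq_neg {m n : Type*} [Fintype m]
    [Fintype n] {A : Matrix n n ℝ} (hA : A.PosSemidef) {J : Matrix m n ℝ} {c : m → ℝ}
    {x : n → ℝ} (hJx : J *ᵥ x = 0) (hAx : A *ᵥ x = -(Jᵀ *ᵥ c)) : Jᵀ *ᵥ c = 0 := by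
  have horth : star x ⬝ᵥ -(Jᵀ *ᵥ c) = 0 := by
    rw [dotProduct_neg, star_trivial, dotProduct_transpose_mulVec_eq_zero_of_mulVec_eq_zero hJx,
      neg_zero]
  exact neg_eq_zero.mp (hA.eq_zero_of_mulVec_eq_of_dotProduct_eq_zero hAx horth)

end Matrix

theorem normal_step_nonzero_general (N M : ℕ)
    (H : Matrix (Fin N) (Fin N) ℝ)
    (lam : ℝ)
    (J : Matrix (Fin M) (Fin N) ℝ) (c : Fin M → ℝ)
    (hg : Jᵀ.mulVec c ≠ 0)
    (hpsd : (H + lam • (1 : Matrix (Fin N) (Fin N) ℝ)).PosSemidef)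
    (n : Fin N → ℝ)
    (hn : (H + lam • (1 : Matrix (Fin N) (Fin N) ℝ)).mulVec n = -(Jᵀ.mulVec c)) :
    n ≠ 0 ∧ ∀ t : Fin N → ℝ, J.mulVec t = 0 → n + t ≠ 0 := by
  have step_ne_zero : ∀ t : Fin N → ℝ, J *ᵥ t = 0 → n + t ≠ 0 := by
    intro t hJt hnt
    have hJn : J *ᵥ n = 0 := by
      rw [eq_neg_of_add_eq_zero_left hnt, mulVec_neg, hJt, neg_zero]
    exact hg (hpsd.transpose_mulVec_eq_zero_of_mulVec_eq_neg hJn hn)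
  refine ⟨fun hn0 => step_ne_zero 0 (mulVec_zero J) ?_, step_ne_zero⟩
  rw [hn0, add_zero]

/-- If `g = Jᵀc ≠ 0`, `H + λI ⪰ 0`, and `(H + λI)n = -g`, then `n ≠ 0` and
`n + t ≠ 0` for every `t` in the null space of `J`. -/
theorem normal_step_nonzero (N M : ℕ) (hN : 0 < N) (hM : 0 < M)
    (H : Matrix (Fin N) (Fin N) ℝ) (hH : H.IsSymm)
    (lam : ℝ) (hlam : 0 ≤ lam)
    (J : Matrix (Fin M) (Fin N) ℝ) (c : Fin M → ℝ)
    (hg : Jᵀ.mulVec c ≠ 0)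
    (hpsd : (H + lam • (1 : Matrix (Fin N) (Fin N) ℝ)).PosSemidef)
    (n : Fin N → ℝ)
    (hn : (H + lam • (1 : Matrix (Fin N) (Fin N) ℝ)).mulVec n = -(Jᵀ.mulVec c)) :
    n ≠ 0 ∧ ∀ t : Fin N → ℝ, J.mulVec t = 0 → n + t ≠ 0 :=
  normal_step_nonzero_general N M H lam J c hg hpsd n hn
end

section
/- Let κρ, κv1, κv2 ∈ (0,1), let s ∈ ℝ^N with s ≠ 0, and let vmax > 0 and v⁺ ≥ 0 be reals satisfying v⁺ ≤ vmax − κρ‖s‖³. Define w = min{ max{κv1·vmax, vmax − κρ‖s‖³}, v⁺ + κv2·(vmax − v⁺) }. Then: (i) w ≥ v⁺; (ii) w > 0; (iii) w < vmax; and (iv) vmax − w ≥ κρ(1 − κv2)‖s‖³. -/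
/-!
The second argument of the `min` is the convex combination `v⁺ + κv2 (vmax - v⁺)`, which lies
above `v⁺` and falls short of `vmax` by `(1 - κv2)(vmax - v⁺) ≥ (1 - κv2) κρ ‖s‖³`; this gives
the upper bounds. The first argument is at least `vmax - κρ ‖s‖³ ≥ v⁺` and at least
`κv1 vmax > 0`, which gives the lower bounds.
-/

/-- The update (12) of the funnel radius, with `d = κρ ‖s‖³` the required decrease (11c). -/
def funnelRadiusUpdate (κv1 κv2 vmax vplus d : ℝ) : ℝ :=
  min (max (κv1 * vmax) (vmax - d)) (vplus + κv2 * (vmax - vplus))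

section

variable {κv1 κv2 vmax vplus d : ℝ}

theorem le_funnelRadiusUpdate (hκv2 : 0 ≤ κv2) (hd : 0 ≤ d) (hacc : vplus ≤ vmax - d) :
    vplus ≤ funnelRadiusUpdate κv1 κv2 vmax vplus d := by
  have hgap : 0 ≤ vmax - vplus := by linarith
  exact le_min (le_max_of_le_right hacc) (le_add_of_nonneg_right (mul_nonneg hκv2 hgap))

theorem funnelRadiusUpdate_pos (hκv1 : 0 < κv1) (hκv2 : κv2 ∈ Set.Ioc 0 1) (hvmax : 0 < vmax)
    (hvplus : 0 ≤ vplus) : 0 < funnelRadiusUpdate κv1 κv2 vmax vplus d := by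
  obtain ⟨hκv2₀, hκv2₁⟩ := hκv2
  have hconvex : vplus + κv2 * (vmax - vplus) = (1 - κv2) * vplus + κv2 * vmax := by ring
  refine lt_min (lt_max_of_lt_left (mul_pos hκv1 hvmax)) ?_
  rw [hconvex]
  exact add_pos_of_nonneg_of_pos (mul_nonneg (by linarith) hvplus) (mul_pos hκv2₀ hvmax)

theorem mul_le_sub_funnelRadiusUpdate (hκv2 : κv2 ≤ 1) (hacc : vplus ≤ vmax - d) :
    (1 - κv2) * d ≤ vmax - funnelRadiusUpdate κv1 κv2 vmax vplus d :=
  calc (1 - κv2) * d ≤ (1 - κv2) * (vmax - vplus) :=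
        mul_le_mul_of_nonneg_left (by linarith) (by linarith)
    _ = vmax - (vplus + κv2 * (vmax - vplus)) := by ring
    _ ≤ vmax - funnelRadiusUpdate κv1 κv2 vmax vplus d := sub_le_sub_left (min_le_right _ _) _

theorem funnelRadiusUpdate_lt (hκv2 : κv2 < 1) (hd : 0 < d) (hacc : vplus ≤ vmax - d) :
    funnelRadiusUpdate κv1 κv2 vmax vplus d < vmax := by
  have hdecrease := mul_le_sub_funnelRadiusUpdate (κv1 := κv1) hκv2.le hacc
  have hpos : 0 < (1 - κv2) * d := mul_pos (by linarith) hd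
  linarith

end

/-- properties of the F-iteration trust-funnel radius update. -/
theorem funnel_update_F_iteration (N : ℕ) (κρ κv1 κv2 : ℝ)
    (hκρ : κρ ∈ Set.Ioo (0 : ℝ) 1) (hκv1 : κv1 ∈ Set.Ioo (0 : ℝ) 1)
    (hκv2 : κv2 ∈ Set.Ioo (0 : ℝ) 1)
    (s : EuclideanSpace ℝ (Fin N)) (hs : s ≠ 0)
    (vmax vplus : ℝ) (hvmax : 0 < vmax) (hvplus : 0 ≤ vplus)
    (hacc : vplus ≤ vmax - κρ * ‖s‖ ^ 3) :
    let w := min (max (κv1 * vmax) (vmax - κρ * ‖s‖ ^ 3)) (vplus + κv2 * (vmax - vplus))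
    w ≥ vplus ∧ 0 < w ∧ w < vmax ∧ vmax - w ≥ κρ * (1 - κv2) * ‖s‖ ^ 3 := by
  intro w
  have hd : 0 < κρ * ‖s‖ ^ 3 := mul_pos hκρ.1 (pow_pos (norm_pos_iff.mpr hs) 3)
  refine ⟨le_funnelRadiusUpdate hκv2.1.le hd.le hacc,
    funnelRadiusUpdate_pos hκv1.1 (Set.Ioo_subset_Ioc_self hκv2) hvmax hvplus,
    funnelRadiusUpdate_lt hκv2.2 hd hacc, ?_⟩
  calc κρ * (1 - κv2) * ‖s‖ ^ 3 = (1 - κv2) * (κρ * ‖s‖ ^ 3) := by ring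
    _ ≤ vmax - w := mul_le_sub_funnelRadiusUpdate hκv2.2.le hacc
end

section
/- Let v : ℝ^N → ℝ be continuously differentiable with gradient ∇v Lipschitz continuous with constant L > 0 on the segment [x, x+s]. Let H be a symmetric N×N real matrix with operator norm ‖H‖ ≤ θ, and define the quadratic model m(d) = v(x) + ⟨∇v(x), d⟩ + ½⟨H d, d⟩. Let κvm ∈ (0,1), κδ > 1, κρ ∈ (0,1), λ ≥ 0, and n, s ∈ ℝ^N with s ≠ 0. If v(x) − m(s) ≥ ½ κvm λ ‖n‖², ‖s‖ ≤ κδ ‖n‖, and λ ≥ (κδ²/κvm)(2L + θ + 2κρ‖s‖), then v(x) − v(x+s) ≥ κρ ‖s‖³. -/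
/-!
The mean value inequality with the Lipschitz bound on `∇v` along `[x, x + s]`, together with
`⟪H s, s⟫ ≥ -θ‖s‖²`, gives `v (x + s) ≤ m s + (L + θ / 2)‖s‖²`. On the other hand
`‖s‖ ≤ κδ‖n‖` and the lower bound on `λ` make the model decrease
`½ κvm λ ‖n‖² ≥ ½ ‖s‖² (2L + θ + 2κρ‖s‖) = (L + θ / 2)‖s‖² + κρ‖s‖³`, and the two combine.
-/

open scoped RealInnerProductSpace

open InnerProductSpace in
theorem abs_sub_sub_inner_gradient_le_of_lipschitz_on_segment {E : Type*}
    [NormedAddCommGroup E] [InnerProductSpace ℝ E] [CompleteSpace E] {f : E → ℝ} {x s : E}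
    {L : ℝ} (hL : 0 ≤ L) (hf : ∀ y ∈ segment ℝ x (x + s), DifferentiableAt ℝ f y)
    (hlip : ∀ y ∈ segment ℝ x (x + s), ‖gradient f y - gradient f x‖ ≤ L * ‖y - x‖) :
    |f (x + s) - f x - ⟪gradient f x, s⟫| ≤ L * ‖s‖ ^ 2 := by
  have hbound : ∀ y ∈ segment ℝ x (x + s),
      ‖fderiv ℝ f y - toDual ℝ E (gradient f x)‖ ≤ L * ‖s‖ := by
    intro y hy
    rw [← toDual_gradient, ← map_sub, LinearIsometryEquiv.norm_map]
    calc ‖gradient f y - gradient f x‖ ≤ L * ‖y - x‖ := hlip y hy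
      _ ≤ L * ‖s‖ := by gcongr; simpa using norm_sub_le_of_mem_segment hy
  simpa [toDual_apply_apply, sq, mul_assoc] using
    (convex_segment x (x + s)).norm_image_sub_le_of_norm_fderiv_le' hf hbound
      (left_mem_segment ℝ _ _) (right_mem_segment ℝ _ _)

theorem ContinuousLinearMap.abs_inner_apply_self_le {E : Type*} [NormedAddCommGroup E]
    [InnerProductSpace ℝ E] (T : E →L[ℝ] E) (s : E) : |⟪T s, s⟫| ≤ ‖T‖ * ‖s‖ ^ 2 :=
  calc |⟪T s, s⟫| ≤ ‖T s‖ * ‖s‖ := abs_real_inner_le_norm _ _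
    _ ≤ ‖T‖ * ‖s‖ * ‖s‖ := by gcongr; exact T.le_opNorm s
    _ = ‖T‖ * ‖s‖ ^ 2 := by ring

theorem sq_mul_le_mul_mul_sq_of_le_mul {κ lam a b c δ : ℝ} (hκ : 0 < κ) (hc : 0 ≤ c)
    (ha : 0 ≤ a) (hab : a ≤ δ * b) (hlam : δ ^ 2 / κ * c ≤ lam) :
    a ^ 2 * c ≤ κ * lam * b ^ 2 :=
  calc a ^ 2 * c ≤ (δ * b) ^ 2 * c := by gcongr
    _ = κ * (δ ^ 2 / κ * c) * b ^ 2 := by field_simp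
    _ ≤ κ * lam * b ^ 2 := by gcongr

theorem large_multiplier_sufficient_decrease_general (N : ℕ)
    (v : EuclideanSpace ℝ (Fin N) → ℝ) (hv : ContDiff ℝ 1 v)
    (x s : EuclideanSpace ℝ (Fin N))
    (L : ℝ) (hL : 0 < L)
    (hlip : ∀ a ∈ segment ℝ x (x + s), ∀ b ∈ segment ℝ x (x + s),
      ‖gradient v a - gradient v b‖ ≤ L * ‖a - b‖)
    (H : EuclideanSpace ℝ (Fin N) →L[ℝ] EuclideanSpace ℝ (Fin N))
    (θ : ℝ) (hHθ : ‖H‖ ≤ θ)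
    (m : EuclideanSpace ℝ (Fin N) → ℝ)
    (hm : ∀ d, m d = v x + ⟪gradient v x, d⟫ + (1 / 2) * ⟪H d, d⟫)
    (κvm κδ κρ lam : ℝ)
    (hκvm : κvm ∈ Set.Ioo (0 : ℝ) 1) (hκρ : κρ ∈ Set.Ioo (0 : ℝ) 1)
    (n : EuclideanSpace ℝ (Fin N))
    (hdec : v x - m s ≥ (1 / 2) * κvm * lam * ‖n‖ ^ 2)
    (hsn : ‖s‖ ≤ κδ * ‖n‖)
    (hlamlb : lam ≥ (κδ ^ 2 / κvm) * (2 * L + θ + 2 * κρ * ‖s‖)) :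
    v x - v (x + s) ≥ κρ * ‖s‖ ^ 3 := by
  have htaylor := (abs_le.mp <| abs_sub_sub_inner_gradient_le_of_lipschitz_on_segment hL.le
    (fun y _ ↦ hv.differentiable one_ne_zero y)
    (fun y hy ↦ hlip y hy x (left_mem_segment ℝ _ _))).2
  have hcurv : -(θ * ‖s‖ ^ 2) ≤ ⟪H s, s⟫ :=
    (abs_le.mp (H.abs_inner_apply_self_le s)).1.trans' (by gcongr)
  have hθ : 0 ≤ θ := (norm_nonneg H).trans hHθ
  have hκρ0 : 0 ≤ κρ := hκρ.1.le
  have hmult := sq_mul_le_mul_mul_sq_of_le_mul hκvm.1 (by positivity) (norm_nonneg s) hsn hlamlb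
  rw [hm] at hdec
  linarith

/-- core of Lemma 3.10: if the trust-region multiplier `λ` of the normal
subproblem is sufficiently large relative to the trial step `s`, then the actual decrease in
the constraint-violation measure `v` is at least `κρ‖s‖³`. -/
theorem large_multiplier_sufficient_decrease (N : ℕ)
    (v : EuclideanSpace ℝ (Fin N) → ℝ) (hv : ContDiff ℝ 1 v)
    (x s : EuclideanSpace ℝ (Fin N)) (hs : s ≠ 0)
    (L : ℝ) (hL : 0 < L)
    (hlip : ∀ a ∈ segment ℝ x (x + s), ∀ b ∈ segment ℝ x (x + s),
      ‖gradient v a - gradient v b‖ ≤ L * ‖a - b‖)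
    (H : EuclideanSpace ℝ (Fin N) →L[ℝ] EuclideanSpace ℝ (Fin N))
    (hHsa : IsSelfAdjoint H) (θ : ℝ) (hHθ : ‖H‖ ≤ θ)
    (m : EuclideanSpace ℝ (Fin N) → ℝ)
    (hm : ∀ d, m d = v x + ⟪gradient v x, d⟫ + (1 / 2) * ⟪H d, d⟫)
    (κvm κδ κρ lam : ℝ)
    (hκvm : κvm ∈ Set.Ioo (0 : ℝ) 1) (hκδ : 1 < κδ) (hκρ : κρ ∈ Set.Ioo (0 : ℝ) 1)
    (hlam : 0 ≤ lam)
    (n : EuclideanSpace ℝ (Fin N))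
    (hdec : v x - m s ≥ (1 / 2) * κvm * lam * ‖n‖ ^ 2)
    (hsn : ‖s‖ ≤ κδ * ‖n‖)
    (hlamlb : lam ≥ (κδ ^ 2 / κvm) * (2 * L + θ + 2 * κρ * ‖s‖)) :
    v x - v (x + s) ≥ κρ * ‖s‖ ^ 3 :=
  large_multiplier_sufficient_decrease_general N v hv x s L hL hlip H θ hHθ m hm κvm κδ κρ lam hκvm
    hκρ n hdec hsn hlamlb
end

section
/- Let g ∈ ℝ^N with g ≠ 0, let H be a symmetric N×N real matrix with operator norm ‖H‖ > 0, let λ ≥ 0, δ > 0, and let n ∈ ℝ^N satisfy (H + λI)n = −g, ‖n‖ ≤ δ, and λ(δ − ‖n‖) = 0. Then ‖n‖ ≥ min{δ, ‖g‖/‖H‖} > 0. Consequently, for any κntn ∈ (0,1) and any s ∈ ℝ^N with ‖s‖ ≥ κntn‖n‖, it holds that ‖s‖ ≥ κntn min{δ, ‖g‖/‖H‖} > 0. -/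
/-! Complementary slackness leaves two cases. If `λ ≠ 0` the step lies on the trust-region
boundary, `‖n‖ = δ`. If `λ = 0`, stationarity reads `H n = -g`, so `‖g‖ ≤ ‖H‖ ‖n‖`. -/

open Matrix

/-- Euclidean (ℓ²) norm of a vector in `Fin n → ℝ`. -/
noncomputable def evnorm {n : ℕ} (x : Fin n → ℝ) : ℝ :=
  ‖(WithLp.equiv 2 (Fin n → ℝ)).symm x‖

theorem evnorm_pos {N : ℕ} {x : Fin N → ℝ} (hx : x ≠ 0) : 0 < evnorm x := by
  simpa [evnorm] using hx

theorem evnorm_neg {N : ℕ} (x : Fin N → ℝ) : evnorm (-x) = evnorm x :=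
  norm_neg ((WithLp.equiv 2 (Fin N → ℝ)).symm x)

theorem evnorm_mulVec_le {N : ℕ} (A : Matrix (Fin N) (Fin N) ℝ) (x : Fin N → ℝ) :
    evnorm (A *ᵥ x) ≤ ‖Matrix.toEuclideanCLM (𝕜 := ℝ) A‖ * evnorm x :=
  (Matrix.toEuclideanCLM (𝕜 := ℝ) A).le_opNorm _

theorem min_le_evnorm_of_stationary {N : ℕ} {g n : Fin N → ℝ} {H : Matrix (Fin N) (Fin N) ℝ}
    {lam δ : ℝ} (hstat : (H + lam • (1 : Matrix (Fin N) (Fin N) ℝ)) *ᵥ n = -g)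
    (hcomp : lam * (δ - evnorm n) = 0) :
    min δ (evnorm g / ‖Matrix.toEuclideanCLM (𝕜 := ℝ) H‖) ≤ evnorm n := by
  rcases mul_eq_zero.mp hcomp with hlam | hboundary
  · have hHn : H *ᵥ n = -g := by simpa [hlam] using hstat
    have hg : evnorm g ≤ ‖Matrix.toEuclideanCLM (𝕜 := ℝ) H‖ * evnorm n := by
      simpa [hHn, evnorm_neg] using evnorm_mulVec_le H n
    exact (min_le_right _ _).trans
      (div_le_of_le_mul₀ (norm_nonneg _) (norm_nonneg _) (by rwa [mul_comm] at hg))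
  · exact (min_le_left _ _).trans (sub_eq_zero.mp hboundary).le

theorem normal_step_norm_lower_bound_general (N : ℕ) (g : Fin N → ℝ) (hg : g ≠ 0)
    (H : Matrix (Fin N) (Fin N) ℝ)
    (hHnorm : 0 < ‖Matrix.toEuclideanCLM (𝕜 := ℝ) H‖)
    (lam δ : ℝ) (hδ : 0 < δ)
    (n : Fin N → ℝ)
    (hstat : (H + lam • (1 : Matrix (Fin N) (Fin N) ℝ)).mulVec n = -g)
    (hcomp : lam * (δ - evnorm n) = 0) :
    (evnorm n ≥ min δ (evnorm g / ‖Matrix.toEuclideanCLM (𝕜 := ℝ) H‖)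
      ∧ 0 < min δ (evnorm g / ‖Matrix.toEuclideanCLM (𝕜 := ℝ) H‖))
    ∧ ∀ κntn : ℝ, κntn ∈ Set.Ioo (0 : ℝ) 1 → ∀ s : Fin N → ℝ,
        evnorm s ≥ κntn * evnorm n →
        evnorm s ≥ κntn * min δ (evnorm g / ‖Matrix.toEuclideanCLM (𝕜 := ℝ) H‖)
          ∧ 0 < κntn * min δ (evnorm g / ‖Matrix.toEuclideanCLM (𝕜 := ℝ) H‖) := by
  have hbound := min_le_evnorm_of_stationary hstat hcomp
  have hpos : 0 < min δ (evnorm g / ‖Matrix.toEuclideanCLM (𝕜 := ℝ) H‖) :=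
    lt_min hδ (div_pos (evnorm_pos hg) hHnorm)
  refine ⟨⟨hbound, hpos⟩, fun κ hκ s hs => ⟨?_, mul_pos hκ.1 hpos⟩⟩
  exact (mul_le_mul_of_nonneg_left hbound hκ.1.le).trans hs

/-- Lemma 3.13: lower bounds on the norms of the normal step and the full
step.  `(n, λ)` satisfy stationarity, feasibility, and complementary slackness for the
trust-region subproblem; `‖H‖` is the operator norm of `H`. -/
theorem normal_step_norm_lower_bound (N : ℕ) (g : Fin N → ℝ) (hg : g ≠ 0)
    (H : Matrix (Fin N) (Fin N) ℝ) (hH : H.IsSymm)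
    (hHnorm : 0 < ‖Matrix.toEuclideanCLM (𝕜 := ℝ) H‖)
    (lam δ : ℝ) (hlam : 0 ≤ lam) (hδ : 0 < δ)
    (n : Fin N → ℝ)
    (hstat : (H + lam • (1 : Matrix (Fin N) (Fin N) ℝ)).mulVec n = -g)
    (hfeas : evnorm n ≤ δ)
    (hcomp : lam * (δ - evnorm n) = 0) :
    (evnorm n ≥ min δ (evnorm g / ‖Matrix.toEuclideanCLM (𝕜 := ℝ) H‖)
      ∧ 0 < min δ (evnorm g / ‖Matrix.toEuclideanCLM (𝕜 := ℝ) H‖))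
    ∧ ∀ κntn : ℝ, κntn ∈ Set.Ioo (0 : ℝ) 1 → ∀ s : Fin N → ℝ,
        evnorm s ≥ κntn * evnorm n →
        evnorm s ≥ κntn * min δ (evnorm g / ‖Matrix.toEuclideanCLM (𝕜 := ℝ) H‖)
          ∧ 0 < κntn * min δ (evnorm g / ‖Matrix.toEuclideanCLM (𝕜 := ℝ) H‖) :=
  normal_step_norm_lower_bound_general N g hg H hHnorm lam δ hδ n hstat hcomp
end

section
/- Let v : ℝ^N → ℝ be twice continuously differentiable whose Hessian is Lipschitz continuous with constant L_H > 0 on the segment [x, x+s]. Define the quadratic model m(d) = v(x) + ⟨∇v(x), d⟩ + ½⟨∇²v(x) d, d⟩. Let κvm ∈ (0,1), κδ > 1, κρ ∈ (0,1), λ ≥ 0, and n, s ∈ ℝ^N with s ≠ 0. If v(x) − m(s) ≥ ½ κvm λ ‖n‖², ‖s‖ ≤ κδ ‖n‖, and λ ≥ (κδ²/κvm)(L_H + 2κρ)‖s‖, then v(x) − v(x+s) ≥ κρ ‖s‖³. -/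
/-!
Split `v x - v (x + s) = (v x - m s) - (v (x + s) - m s)`. Along the segment the Hessian stays
within `L_H‖s‖` of `∇²v(x)`, so integrating twice along `t ↦ x + t • s` bounds the Taylor
remainder `v (x + s) - m s` by `½ L_H‖s‖³`. On the other side, `‖s‖ ≤ κδ‖n‖` and the lower
bound on `λ` turn the model decrease `½ κvm λ‖n‖²` into at least `½ (L_H + 2κρ)‖s‖³`.
-/

open scoped RealInnerProductSpace
open Set

theorem sub_le_of_hasDerivAt_le_affine {f f' : ℝ → ℝ} {a b : ℝ}
    (hf : ∀ t ∈ Icc (0 : ℝ) 1, HasDerivAt f (f' t) t)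
    (hf' : ∀ t ∈ Icc (0 : ℝ) 1, f' t ≤ a + b * t) :
    f 1 - f 0 ≤ a + b / 2 := by
  have hB (t : ℝ) : HasDerivAt (fun τ => f 0 + a * τ + b / 2 * τ ^ 2) (a + b * t) t := by
    have := (((hasDerivAt_id t).const_mul a).const_add (f 0)).add
      ((hasDerivAt_pow 2 t).const_mul (b / 2))
    exact this.congr_deriv (by ring)
  have := image_le_of_deriv_right_le_deriv_boundary (a := 0) (b := 1)
    (fun t ht => (hf t ht).continuousAt.continuousWithinAt)
    (fun t ht => (hf t (Ico_subset_Icc_self ht)).hasDerivWithinAt) (le_of_eq (by simp))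
    (fun t _ => (hB t).continuousAt.continuousWithinAt) (fun t _ => (hB t).hasDerivWithinAt)
    (fun t ht => hf' t (Ico_subset_Icc_self ht)) (right_mem_Icc.2 zero_le_one)
  linarith

theorem norm_image_add_smul_sub_le {E F : Type*} [NormedAddCommGroup E] [NormedSpace ℝ E]
    [NormedAddCommGroup F] [NormedSpace ℝ F] {G : E → F} (hG : Differentiable ℝ G) {x s : E}
    {C : ℝ} (hC : ∀ a ∈ segment ℝ x (x + s), ‖fderiv ℝ G a - fderiv ℝ G x‖ ≤ C)
    {t : ℝ} (ht : t ∈ Icc (0 : ℝ) 1) :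
    ‖G (x + t • s) - G x - t • fderiv ℝ G x s‖ ≤ C * t * ‖s‖ := by
  have hxt : x + t • s ∈ segment ℝ x (x + s) := by
    rw [segment_eq_image']
    exact ⟨t, ht, by simp⟩
  have := (convex_segment x (x + s)).norm_image_sub_le_of_norm_fderiv_le' (fun a _ => hG a) hC
    (left_mem_segment ℝ x (x + s)) hxt
  rwa [add_sub_cancel_left, map_smul, norm_smul, Real.norm_eq_abs, abs_of_nonneg ht.1,
    ← mul_assoc] at this

section Gradient

variable {E : Type*} [NormedAddCommGroup E] [InnerProductSpace ℝ E] [CompleteSpace E]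
  {v : E → ℝ}

theorem ContDiff.gradient {n : WithTop ℕ∞} (hv : ContDiff ℝ (n + 1) v) :
    ContDiff ℝ n (gradient v) :=
  (InnerProductSpace.toDual ℝ E).symm.contDiff.comp (hv.fderiv_right le_rfl)

theorem hasDerivAt_comp_add_smul {x s : E} {t : ℝ} (hv : DifferentiableAt ℝ v (x + t • s)) :
    HasDerivAt (fun τ : ℝ => v (x + τ • s)) ⟪gradient v (x + t • s), s⟫ t := by
  rw [inner_gradient_left]
  exact hv.hasFDerivAt.comp_hasDerivAt t
    (by simpa using ((hasDerivAt_id t).smul_const s).const_add x)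

theorem le_quadratic_model_add_of_norm_fderiv_gradient_sub_le (hv : Differentiable ℝ v)
    (hG : Differentiable ℝ (gradient v)) {x s : E} {C : ℝ}
    (hC : ∀ a ∈ segment ℝ x (x + s), ‖fderiv ℝ (gradient v) a - fderiv ℝ (gradient v) x‖ ≤ C) :
    v (x + s) ≤ v x + ⟪gradient v x, s⟫ + 1 / 2 * ⟪fderiv ℝ (gradient v) x s, s⟫
      + C / 2 * ‖s‖ ^ 2 := by
  have hslope : ∀ t ∈ Icc (0 : ℝ) 1, ⟪gradient v (x + t • s), s⟫
      ≤ ⟪gradient v x, s⟫ + (⟪fderiv ℝ (gradient v) x s, s⟫ + C * ‖s‖ ^ 2) * t := by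
    intro t ht
    have hinner : ⟪gradient v (x + t • s), s⟫ - ⟪gradient v x, s⟫
          - t * ⟪fderiv ℝ (gradient v) x s, s⟫
        = ⟪gradient v (x + t • s) - gradient v x - t • fderiv ℝ (gradient v) x s, s⟫ := by
      rw [inner_sub_left, inner_sub_left, real_inner_smul_left]
    have := (real_inner_le_norm _ s).trans
      (mul_le_mul_of_nonneg_right (norm_image_add_smul_sub_le hG hC ht) (norm_nonneg s))
    linarith
  have := sub_le_of_hasDerivAt_le_affine (fun t _ => hasDerivAt_comp_add_smul (hv _)) hslope
  simp only [zero_smul, add_zero, one_smul] at this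
  linarith

end Gradient

theorem mul_pow_three_le_mul_mul_sq {κ δ c σ ν lam : ℝ} (hκ : 0 < κ) (hc : 0 ≤ c) (hσ : 0 ≤ σ)
    (hσν : σ ≤ δ * ν) (hlam : δ ^ 2 / κ * c * σ ≤ lam) : c * σ ^ 3 ≤ κ * lam * ν ^ 2 :=
  calc c * σ ^ 3 = c * σ * σ ^ 2 := by ring
    _ ≤ c * σ * (δ * ν) ^ 2 := by gcongr
    _ = κ * (δ ^ 2 / κ * c * σ) * ν ^ 2 := by field_simp
    _ ≤ κ * lam * ν ^ 2 := by gcongr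

theorem large_multiplier_sufficient_decrease_hessian_general (N : ℕ)
    (v : EuclideanSpace ℝ (Fin N) → ℝ) (hv : ContDiff ℝ 2 v)
    (x s : EuclideanSpace ℝ (Fin N))
    (LH : ℝ) (hLH : 0 < LH)
    (hlip : ∀ a ∈ segment ℝ x (x + s), ∀ b ∈ segment ℝ x (x + s),
      ‖fderiv ℝ (gradient v) a - fderiv ℝ (gradient v) b‖ ≤ LH * ‖a - b‖)
    (m : EuclideanSpace ℝ (Fin N) → ℝ)
    (hm : ∀ d, m d = v x + ⟪gradient v x, d⟫ + (1 / 2) * ⟪fderiv ℝ (gradient v) x d, d⟫)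
    (κvm κδ κρ lam : ℝ)
    (hκvm : κvm ∈ Set.Ioo (0 : ℝ) 1) (hκρ : κρ ∈ Set.Ioo (0 : ℝ) 1)
    (n : EuclideanSpace ℝ (Fin N))
    (hdec : v x - m s ≥ (1 / 2) * κvm * lam * ‖n‖ ^ 2)
    (hsn : ‖s‖ ≤ κδ * ‖n‖)
    (hlamlb : lam ≥ (κδ ^ 2 / κvm) * (LH + 2 * κρ) * ‖s‖) :
    v x - v (x + s) ≥ κρ * ‖s‖ ^ 3 := by
  have hhess : ∀ a ∈ segment ℝ x (x + s),
      ‖fderiv ℝ (gradient v) a - fderiv ℝ (gradient v) x‖ ≤ LH * ‖s‖ := fun a ha =>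
    (hlip a ha x (left_mem_segment ℝ x (x + s))).trans <| by
      gcongr
      simpa using norm_sub_le_of_mem_segment ha
  have htaylor := le_quadratic_model_add_of_norm_fderiv_gradient_sub_le
    (hv.differentiable two_ne_zero) ((hv.gradient (n := 1)).differentiable one_ne_zero) hhess
  have hmodel :=
    mul_pow_three_le_mul_mul_sq hκvm.1 (by linarith [hκρ.1]) (norm_nonneg s) hsn hlamlb
  rw [hm] at hdec
  linarith

/-- core of Lemma 3.16: under a Lipschitz Hessian, if the trust-region
multiplier `λ` of the normal subproblem satisfies `λ ≥ κδ²κvm⁻¹(L_H + 2κρ)‖s‖`, then the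
actual decrease in `v` is at least `κρ‖s‖³`.  Here `gradient v` is `∇v` and
`fderiv ℝ (gradient v) x` is the Hessian operator `∇²v(x)`. -/
theorem large_multiplier_sufficient_decrease_hessian (N : ℕ)
    (v : EuclideanSpace ℝ (Fin N) → ℝ) (hv : ContDiff ℝ 2 v)
    (x s : EuclideanSpace ℝ (Fin N)) (hs : s ≠ 0)
    (LH : ℝ) (hLH : 0 < LH)
    (hlip : ∀ a ∈ segment ℝ x (x + s), ∀ b ∈ segment ℝ x (x + s),
      ‖fderiv ℝ (gradient v) a - fderiv ℝ (gradient v) b‖ ≤ LH * ‖a - b‖)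
    (m : EuclideanSpace ℝ (Fin N) → ℝ)
    (hm : ∀ d, m d = v x + ⟪gradient v x, d⟫ + (1 / 2) * ⟪fderiv ℝ (gradient v) x d, d⟫)
    (κvm κδ κρ lam : ℝ)
    (hκvm : κvm ∈ Set.Ioo (0 : ℝ) 1) (hκδ : 1 < κδ) (hκρ : κρ ∈ Set.Ioo (0 : ℝ) 1)
    (hlam : 0 ≤ lam)
    (n : EuclideanSpace ℝ (Fin N))
    (hdec : v x - m s ≥ (1 / 2) * κvm * lam * ‖n‖ ^ 2)
    (hsn : ‖s‖ ≤ κδ * ‖n‖)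
    (hlamlb : lam ≥ (κδ ^ 2 / κvm) * (LH + 2 * κρ) * ‖s‖) :
    v x - v (x + s) ≥ κρ * ‖s‖ ^ 3 :=
  large_multiplier_sufficient_decrease_hessian_general N v hv x s LH hLH hlip m hm κvm κδ κρ lam
    hκvm hκρ n hdec hsn hlamlb
end

section
/- Let H be a symmetric N×N real matrix, J an M×N real matrix, g, n, t ∈ ℝ^N, y ∈ ℝ^M, λ ≥ 0, and f ∈ ℝ. Define the quadratic model m(d) = f + g^T d + ½ d^T H d. If (H + λI) t + J^T y = −(g + (H + λI) n) and J t = 0, then m(n) − m(n + t) = ½ t^T (H + λI) t + ½ λ ‖t‖² + λ n^T t. -/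
/-! Dotting the stationarity equation with `t` removes the multiplier `y`, because `J t = 0`;
this expresses `gᵀ t` through `t` and `n`. Substituting it into the expansion of
`m(n) - m(n + t)`, where symmetry of `H` merges `nᵀ H t` and `tᵀ H n`, leaves the claimed
identity. -/

open Matrix

theorem evnorm_sq {N : ℕ} (x : Fin N → ℝ) : evnorm x ^ 2 = x ⬝ᵥ x := by
  rw [evnorm, EuclideanSpace.norm_eq, Real.sq_sqrt (by positivity)]
  simp [dotProduct, sq]

namespace Matrix

variable {ι κ R : Type*} [Fintype ι] [Fintype κ]

theorem dotProduct_transpose_mulVec_eq_zero [CommSemiring R] {J : Matrix κ ι R} {t : ι → R}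
    (hJt : J *ᵥ t = 0) (y : κ → R) : t ⬝ᵥ Jᵀ *ᵥ y = 0 := by
  rw [dotProduct_mulVec, vecMul_transpose, hJt, zero_dotProduct]

theorem add_smul_one_mulVec [DecidableEq ι] [CommSemiring R] (H : Matrix ι ι R) (c : R)
    (v : ι → R) : (H + c • (1 : Matrix ι ι R)) *ᵥ v = H *ᵥ v + c • v := by
  rw [add_mulVec, smul_mulVec, one_mulVec]

theorem IsSymm.dotProduct_mulVec_comm [CommSemiring R] {H : Matrix ι ι R} (hH : H.IsSymm)
    (u v : ι → R) : u ⬝ᵥ H *ᵥ v = v ⬝ᵥ H *ᵥ u := by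
  rw [dotProduct_mulVec, ← mulVec_transpose, hH.eq, dotProduct_comm]

theorem IsSymm.add_dotProduct_mulVec_add [CommSemiring R] {H : Matrix ι ι R} (hH : H.IsSymm)
    (u v : ι → R) :
    (u + v) ⬝ᵥ H *ᵥ (u + v) = u ⬝ᵥ H *ᵥ u + 2 * (u ⬝ᵥ H *ᵥ v) + v ⬝ᵥ H *ᵥ v := by
  rw [mulVec_add, dotProduct_add, add_dotProduct, add_dotProduct,
    hH.dotProduct_mulVec_comm v u]
  ring

end Matrix

theorem tangential_model_decrease_general (N M : ℕ)
    (H : Matrix (Fin N) (Fin N) ℝ) (hH : H.IsSymm)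
    (J : Matrix (Fin M) (Fin N) ℝ)
    (g n t : Fin N → ℝ) (y : Fin M → ℝ)
    (lam : ℝ) (f : ℝ)
    (m : (Fin N → ℝ) → ℝ)
    (hm : ∀ d, m d = f + g ⬝ᵥ d + (1 / 2) * d ⬝ᵥ H.mulVec d)
    (hstat : (H + lam • (1 : Matrix (Fin N) (Fin N) ℝ)).mulVec t + Jᵀ.mulVec y
      = -(g + (H + lam • (1 : Matrix (Fin N) (Fin N) ℝ)).mulVec n))
    (hnull : J.mulVec t = 0) :
    m n - m (n + t)
      = (1 / 2) * t ⬝ᵥ (H + lam • (1 : Matrix (Fin N) (Fin N) ℝ)).mulVec t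
        + (1 / 2) * lam * evnorm t ^ 2 + lam * (n ⬝ᵥ t) := by
  have hstat_t := congrArg (t ⬝ᵥ ·) hstat
  simp only [dotProduct_add, dotProduct_neg, dotProduct_transpose_mulVec_eq_zero hnull,
    add_smul_one_mulVec, dotProduct_smul, smul_eq_mul] at hstat_t
  rw [hm, hm, hH.add_dotProduct_mulVec_add, evnorm_sq]
  simp only [add_smul_one_mulVec, dotProduct_add, dotProduct_smul, smul_eq_mul]
  rw [dotProduct_comm t g, dotProduct_comm t n, hH.dotProduct_mulVec_comm t n] at hstat_t
  linear_combination -hstat_t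

/-- Lemma 3.19: exact decrease in the quadratic objective model produced by
the tangential step `t`, where `(t, y, λ)` satisfy the stationarity equations of the
tangential trust-region subproblem. -/
theorem tangential_model_decrease (N M : ℕ)
    (H : Matrix (Fin N) (Fin N) ℝ) (hH : H.IsSymm)
    (J : Matrix (Fin M) (Fin N) ℝ)
    (g n t : Fin N → ℝ) (y : Fin M → ℝ)
    (lam : ℝ) (hlam : 0 ≤ lam) (f : ℝ)
    (m : (Fin N → ℝ) → ℝ)
    (hm : ∀ d, m d = f + g ⬝ᵥ d + (1 / 2) * d ⬝ᵥ H.mulVec d)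
    (hstat : (H + lam • (1 : Matrix (Fin N) (Fin N) ℝ)).mulVec t + Jᵀ.mulVec y
      = -(g + (H + lam • (1 : Matrix (Fin N) (Fin N) ℝ)).mulVec n))
    (hnull : J.mulVec t = 0) :
    m n - m (n + t)
      = (1 / 2) * t ⬝ᵥ (H + lam • (1 : Matrix (Fin N) (Fin N) ℝ)).mulVec t
        + (1 / 2) * lam * evnorm t ^ 2 + lam * (n ⬝ᵥ t) :=
  tangential_model_decrease_general N M H hH J g n t y lam f m hm hstat hnull
end

section
/- Let ε > 0, ε_feas > 0, ω > 0, and β ∈ (0,1) be real numbers, and let b ∈ ℝ with 0 ≤ b ≤ ε_feas. If ε_feas² − b² ≥ 2ω ε^{3/2} b^{3/2}, then ε_feas − b ≥ κ_t · min{ε^{3/2} ε_feas^{1/2}, ε_feas}, where κ_t := min{ω β^{3/2}, 1 − β}. -/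
/-!
If `b ≤ β εfeas`, the residual has already dropped by `(1 - β) εfeas`. Otherwise
`b^{3/2} ≥ β^{3/2} εfeas^{3/2}`, and dividing the hypothesis by `εfeas + b ≤ 2 εfeas` gives
`εfeas - b ≥ ω β^{3/2} ε^{3/2} εfeas^{1/2}`.
-/

open Real

lemma le_sub_of_two_mul_le_sq_sub_sq {a b d : ℝ} (ha : 0 < a)
    (h : 2 * a * d ≤ a ^ 2 - b ^ 2) : d ≤ a - b := by
  refine le_of_mul_le_mul_left ?_ (by positivity : 0 < 2 * a)
  -- `2a (a - b) - (a² - b²) = (a - b)²`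
  nlinarith [sq_nonneg (a - b)]

lemma rpow_three_halves_mul_le {a b β : ℝ} (hβ : 0 ≤ β) (ha : 0 ≤ a) (hb : β * a ≤ b) :
    β ^ ((3 : ℝ) / 2) * (a * a ^ ((1 : ℝ) / 2)) ≤ b ^ ((3 : ℝ) / 2) := by
  calc β ^ ((3 : ℝ) / 2) * (a * a ^ ((1 : ℝ) / 2))
      = (β * a) ^ ((3 : ℝ) / 2) := by
        rw [mul_rpow hβ ha, show (3 : ℝ) / 2 = 1 + 1 / 2 by norm_num,
          rpow_one_add' ha (by norm_num)]
    _ ≤ b ^ ((3 : ℝ) / 2) := rpow_le_rpow (by positivity) hb (by norm_num)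

theorem residual_decrease_general (ε εfeas ω β : ℝ)
    (hε : 0 < ε) (hεf : 0 < εfeas) (hω : 0 < ω) (hβ : β ∈ Set.Ioo (0 : ℝ) 1)
    (b : ℝ)
    (h : εfeas ^ 2 - b ^ 2 ≥ 2 * ω * ε ^ ((3 : ℝ) / 2) * b ^ ((3 : ℝ) / 2)) :
    εfeas - b ≥ min (ω * β ^ ((3 : ℝ) / 2)) (1 - β)
      * min (ε ^ ((3 : ℝ) / 2) * εfeas ^ ((1 : ℝ) / 2)) εfeas := by
  obtain ⟨hβ0, hβ1⟩ := hβ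
  have hmin : 0 ≤ min (ε ^ ((3 : ℝ) / 2) * εfeas ^ ((1 : ℝ) / 2)) εfeas :=
    le_min (by positivity) hεf.le
  rcases le_or_gt b (β * εfeas) with hsmall | hlarge
  · calc _ ≤ (1 - β) * εfeas :=
          mul_le_mul (min_le_right _ _) (min_le_right _ _) hmin (by linarith)
      _ ≤ εfeas - b := by linarith
  · have hpow := rpow_three_halves_mul_le hβ0.le hεf.le hlarge.le
    calc _ ≤ ω * β ^ ((3 : ℝ) / 2) * (ε ^ ((3 : ℝ) / 2) * εfeas ^ ((1 : ℝ) / 2)) :=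
          mul_le_mul (min_le_left _ _) (min_le_left _ _) hmin (by positivity)
      _ ≤ εfeas - b := le_sub_of_two_mul_le_sq_sub_sq hεf <| by
        calc _ = 2 * ω * ε ^ ((3 : ℝ) / 2)
              * (β ^ ((3 : ℝ) / 2) * (εfeas * εfeas ^ ((1 : ℝ) / 2))) := by ring
          _ ≤ 2 * ω * ε ^ ((3 : ℝ) / 2) * b ^ ((3 : ℝ) / 2) := by gcongr
          _ ≤ _ := h

/-- core of Lemma A.5: residual decrease bound in phase 2.  Powers with real
exponents are real powers (`Real.rpow`). -/
theorem residual_decrease (ε εfeas ω β : ℝ)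
    (hε : 0 < ε) (hεf : 0 < εfeas) (hω : 0 < ω) (hβ : β ∈ Set.Ioo (0 : ℝ) 1)
    (b : ℝ) (hb0 : 0 ≤ b) (hb : b ≤ εfeas)
    (h : εfeas ^ 2 - b ^ 2 ≥ 2 * ω * ε ^ ((3 : ℝ) / 2) * b ^ ((3 : ℝ) / 2)) :
    εfeas - b ≥ min (ω * β ^ ((3 : ℝ) / 2)) (1 - β)
      * min (ε ^ ((3 : ℝ) / 2) * εfeas ^ ((1 : ℝ) / 2)) εfeas :=
  residual_decrease_general ε εfeas ω β hε hεf hω hβ b h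
end
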